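/- arXiv:2506.10838 — 2 statements merged into one kernel-verified Lean document; each statement's English description precedes it below -/
import Mathlib

section
/- Let f and g be coprime integer polynomials of positive degree and d = gcd(L(f), L(g)). Then d·B(f,g) divides |Res(f,g)|. -/
open Polynomial Matrix

/-- The Sylvester matrix of two integer polynomials. -/
noncomputable def sylvesterMatrix (f g : Polynomial ℤ) :
    Matrix (Fin (g.natDegree + f.natDegree)) (Fin (g.natDegree + f.natDegree)) ℤ :=
  Matrix.of fun i j =>
    if (i : ℕ) < g.natDegree then
      if (i : ℕ) ≤ (j : ℕ) ∧ (j : ℕ) ≤ (i : ℕ) + f.natDegree then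
        f.coeff (f.natDegree + i - j)
      else 0
    else
      if (i : ℕ) - g.natDegree ≤ (j : ℕ) ∧ (j : ℕ) ≤ (i : ℕ) - g.natDegree + g.natDegree then
        g.coeff (g.natDegree + ((i : ℕ) - g.natDegree) - j)
      else 0

/-- The resultant of two integer polynomials, as the determinant of their Sylvester matrix. -/
noncomputable def res (f g : Polynomial ℤ) : ℤ := (sylvesterMatrix f g).det

/-- `B` is a positive common denominator for the (unique) Bezout cofactors `p, q` in `ℚ[x]`
with `deg p < deg g`, `deg q < deg f` and `p*f + q*g = 1`, i.e. `B*p, B*q` lie in `ℤ[x]`. -/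
def IsBezoutDenom (f g : Polynomial ℤ) (B : ℤ) : Prop :=
  0 < B ∧ ∃ p q : Polynomial ℚ,
    p.degree < (g.map (Int.castRingHom ℚ)).degree ∧
    q.degree < (f.map (Int.castRingHom ℚ)).degree ∧
    p * f.map (Int.castRingHom ℚ) + q * g.map (Int.castRingHom ℚ) = 1 ∧
    (∃ P : Polynomial ℤ, P.map (Int.castRingHom ℚ) = Polynomial.C (B : ℚ) * p) ∧
    (∃ Q : Polynomial ℤ, Q.map (Int.castRingHom ℚ) = Polynomial.C (B : ℚ) * q)

/-! Write `Res(f, g) = d * r`. The row of the Sylvester matrix belonging to the top coefficient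
`X ^ (deg f + deg g - 1)` holds only `L(f)`, `L(g)` and zeros, so `d` divides the resultant and,
by Cramer's rule, every entry of the adjugate solution of `P * f + Q * g = Res(f, g)`. Dividing by
`d` gives integral `P, Q` of the right degrees with `P * f + Q * g = r`. By uniqueness of the
Bezout cofactors `p, q`, the polynomials `r * p` and `r * q` are integral; as Bezout denominators
are closed under `gcd`, the least one, `B`, divides `r`. -/

open Polynomial

namespace Matrix

variable {R ι : Type*} [CommRing R] [Fintype ι] [DecidableEq ι]

theorem dvd_det_of_forall_dvd_row (M : Matrix ι ι R) (i : ι) {k : R} (h : ∀ j, k ∣ M i j) :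
    k ∣ M.det := by
  rw [M.det_eq_sum_mul_adjugate_row i]
  exact Finset.dvd_sum fun j _ => (h j).mul_right _

theorem exists_det_eq_mul_and_mulVec_eq_smul [IsDomain R] (M : Matrix ι ι R) (i : ι) {k : R}
    (hk : k ≠ 0) (hM : ∀ j, k ∣ M i j) {v : ι → R} (hv : v i = 0) :
    ∃ r y, M.det = k * r ∧ M *ᵥ y = r • v := by
  have hcol : ∀ j' j, k ∣ M.updateCol j' v i j := fun j' j => by
    rw [updateCol_apply]
    split_ifs
    · rw [hv]; exact dvd_zero k
    · exact hM j
  obtain ⟨r, hr⟩ := M.dvd_det_of_forall_dvd_row i hM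
  choose y hy using fun j => (M.updateCol j v).dvd_det_of_forall_dvd_row i (hcol j)
  have hcramer : k • y = M.cramer v :=
    funext fun j => by rw [Pi.smul_apply, smul_eq_mul, cramer_apply, hy]
  refine ⟨r, y, hr, smul_right_injective _ hk ?_⟩
  change k • (M *ᵥ y) = k • (r • v)
  rw [← mulVec_smul, hcramer, mulVec_cramer, hr, smul_smul]

end Matrix

namespace Polynomial

variable {R : Type*} [CommRing R]

theorem sylvester_apply (f g : R[X]) (m n : ℕ) (i j : Fin (m + n)) :
    sylvester f g m n i j =
      if (j : ℕ) < m then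
        if (j : ℕ) ≤ i ∧ (i : ℕ) ≤ j + n then g.coeff (i - j) else 0
      else
        if (j : ℕ) - m ≤ i ∧ (i : ℕ) ≤ j - m + m then f.coeff (i - (j - m)) else 0 := by
  induction j using Fin.addCases <;> simp [sylvester]

theorem dvd_sylvester_last_row {f g : R[X]} {m n : ℕ} (hmn : 0 < m + n) {k : R}
    (hkf : k ∣ f.coeff m) (hkg : k ∣ g.coeff n) (j : Fin (m + n)) :
    k ∣ sylvester f g m n ⟨m + n - 1, by omega⟩ j := by
  rw [sylvester_apply]
  dsimp only
  split_ifs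
  · rwa [show m + n - 1 - j = n by omega]
  · exact dvd_zero k
  · rwa [show m + n - 1 - (j - m) = m by omega]
  · exact dvd_zero k

theorem exists_resultant_eq_mul_and_mul_add_mul_eq_C [IsDomain R] {f g : R[X]} {m n : ℕ}
    (hf : f.natDegree ≤ m) (hg : g.natDegree ≤ n) (hmn : 1 < m + n) {k : R} (hk : k ≠ 0)
    (hkf : k ∣ f.coeff m) (hkg : k ∣ g.coeff n) :
    ∃ r p q, f.resultant g m n = k * r ∧ p.degree < (n : WithBot ℕ) ∧
      q.degree < (m : WithBot ℕ) ∧ f * p + g * q = C r := by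
  set b₁ := ((degreeLT.basis R m).prod (degreeLT.basis R n)).reindex finSumFinEquiv
  set b₂ := degreeLT.basis R (m + n)
  set one : R[X]_(m + n) :=
    ⟨1, mem_degreeLT.2 (degree_one_le.trans_lt (by exact_mod_cast (by omega : 0 < m + n)))⟩
  have hone : b₂.repr one ⟨m + n - 1, by omega⟩ = 0 := by
    simp only [b₂, one, degreeLT.basis_repr, coeff_one]
    exact if_neg (by omega)
  obtain ⟨r, y, hr, hy⟩ := (sylvester f g m n).exists_det_eq_mul_and_mulVec_eq_smul _ hk
    (dvd_sylvester_last_row (by omega) hkf hkg) hone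
  set pq := b₁.equivFun.symm y
  have hL : sylvesterMap f g hf hg pq = r • one := by
    apply b₂.equivFun.injective
    have hpq : b₁.repr pq = y := b₁.equivFun.apply_symm_apply y
    rw [b₂.equivFun_apply, b₂.equivFun_apply, ← LinearMap.toMatrix_mulVec_repr b₁ b₂,
      toMatrix_sylvesterMap', hpq, hy, map_smul, Finsupp.coe_smul]
  refine ⟨r, pq.2, pq.1, hr, mem_degreeLT.1 pq.2.2, mem_degreeLT.1 pq.1.2, ?_⟩
  simpa [Algebra.smul_def, one] using congrArg Subtype.val hL

theorem eq_C_mul_of_mul_add_mul_eq_C [IsDomain R] {f g p q P Q : R[X]} {r : R}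
    (hpq : p * f + q * g = 1) (hp : p.degree < g.degree) (hP : P.degree < g.degree)
    (h : P * f + Q * g = C r) : P = C r * p := by
  have hdvd : g ∣ (P - C r * p) * f := ⟨C r * q - Q, by linear_combination h - C r * hpq⟩
  have hcop : IsCoprime g f := ⟨q, p, by linear_combination hpq⟩
  refine sub_eq_zero.1 (eq_zero_of_dvd_of_degree_lt (hcop.dvd_of_dvd_mul_right hdvd) ?_)
  rw [C_mul']
  exact (degree_sub_le _ _).trans_lt (max_lt hP ((degree_smul_le _ _).trans_lt hp))

theorem intCast_mul_mem_lifts_gcd {p : ℚ[X]} {a b : ℤ}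
    (ha : C (a : ℚ) * p ∈ lifts (Int.castRingHom ℚ))
    (hb : C (b : ℚ) * p ∈ lifts (Int.castRingHom ℚ)) :
    C ((Int.gcd a b : ℤ) : ℚ) * p ∈ lifts (Int.castRingHom ℚ) := by
  have hC : ∀ z : ℤ, C (z : ℚ) ∈ lifts (Int.castRingHom ℚ) := C_mem_lifts _
  rw [Int.gcd_eq_gcd_ab, Int.cast_add, Int.cast_mul, Int.cast_mul, C_add, C_mul, C_mul]
  convert add_mem (mul_mem (hC (a.gcdA b)) ha) (mul_mem (hC (a.gcdB b)) hb) using 1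
  ring

end Polynomial

theorem sylvesterMatrix_eq_reindex_transpose_sylvester (f g : ℤ[X]) :
    sylvesterMatrix f g = (sylvester f g f.natDegree g.natDegree)ᵀ.reindex
      (Fin.revPerm.trans (finCongr (add_comm _ _)))
      (Fin.revPerm.trans (finCongr (add_comm _ _))) := by
  ext a b
  simp only [sylvesterMatrix, Matrix.of_apply, Matrix.reindex_apply, Matrix.submatrix_apply,
    Matrix.transpose_apply, sylvester_apply, Equiv.symm_trans_apply, finCongr_symm,
    finCongr_apply, Fin.revPerm_symm, Fin.revPerm_apply, Fin.val_rev, Fin.val_cast]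
  split_ifs <;> first | rfl | omega | (congr 1; omega)

theorem res_eq_resultant (f g : ℤ[X]) : res f g = f.resultant g := by
  rw [res, sylvesterMatrix_eq_reindex_transpose_sylvester, Matrix.det_reindex_self,
    Matrix.det_transpose, resultant]

namespace IsBezoutDenom

variable {f g : ℤ[X]} {B r : ℤ} {P Q : ℤ[X]}

theorem gcd_of_mul_add_mul_eq_C (hB : IsBezoutDenom f g B) (hP : P.degree < g.degree)
    (hQ : Q.degree < f.degree) (h : P * f + Q * g = C r) : IsBezoutDenom f g (Int.gcd B r) := by
  obtain ⟨hBpos, p, q, hp, hq, hpq, hpB, hqB⟩ := hB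
  have hinj := (Int.castRingHom ℚ).injective_int
  rw [← degree_map_eq_of_injective hinj, ← degree_map_eq_of_injective hinj g] at hP
  rw [← degree_map_eq_of_injective hinj, ← degree_map_eq_of_injective hinj f] at hQ
  have hPQ : P.map (Int.castRingHom ℚ) * f.map (Int.castRingHom ℚ) +
      Q.map (Int.castRingHom ℚ) * g.map (Int.castRingHom ℚ) = C (r : ℚ) := by
    simpa using congrArg (map (Int.castRingHom ℚ)) h
  have hPr := eq_C_mul_of_mul_add_mul_eq_C hpq hp hP hPQ
  have hQr := eq_C_mul_of_mul_add_mul_eq_C (by rw [add_comm]; exact hpq) hq hQ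
    (by rw [add_comm]; exact hPQ)
  refine ⟨Int.natCast_pos.2 (Int.gcd_pos_of_ne_zero_left r hBpos.ne'), p, q, hp, hq, hpq,
    ?_, ?_⟩
  · exact (mem_lifts _).1 (intCast_mul_mem_lifts_gcd ((mem_lifts _).2 hpB) ⟨P, hPr⟩)
  · exact (mem_lifts _).1 (intCast_mul_mem_lifts_gcd ((mem_lifts _).2 hqB) ⟨Q, hQr⟩)

theorem dvd_of_mul_add_mul_eq_C (hB : IsBezoutDenom f g B)
    (hBmin : ∀ B' : ℤ, IsBezoutDenom f g B' → B ≤ B') (hP : P.degree < g.degree)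
    (hQ : Q.degree < f.degree) (h : P * f + Q * g = C r) : B ∣ r := by
  have hle : B ≤ Int.gcd B r := hBmin _ (hB.gcd_of_mul_add_mul_eq_C hP hQ h)
  have hge : (Int.gcd B r : ℤ) ≤ B := Int.le_of_dvd hB.1 (Int.gcd_dvd_left _ _)
  rw [← le_antisymm hge hle]
  exact Int.gcd_dvd_right _ _

end IsBezoutDenom

theorem statement_13_general (f g : Polynomial ℤ)
    (hf : 0 < f.natDegree) (hg : 0 < g.natDegree)
    (B : ℤ) (hB : IsBezoutDenom f g B)
    (hBmin : ∀ B' : ℤ, IsBezoutDenom f g B' → B ≤ B') :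
    (Int.gcd f.leadingCoeff g.leadingCoeff : ℤ) * B ∣ |res f g| := by
  have hf0 : f ≠ 0 := ne_zero_of_natDegree_gt hf
  have hg0 : g ≠ 0 := ne_zero_of_natDegree_gt hg
  have hd : (Int.gcd f.leadingCoeff g.leadingCoeff : ℤ) ≠ 0 :=
    Int.natCast_ne_zero.2 (Int.gcd_ne_zero_left (leadingCoeff_ne_zero.2 hf0))
  obtain ⟨r, p, q, hres, hp, hq, hpq⟩ := exists_resultant_eq_mul_and_mul_add_mul_eq_C
    (f := f) (g := g) le_rfl le_rfl (by omega) hd (Int.gcd_dvd_left _ _) (Int.gcd_dvd_right _ _)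
  have hBr : B ∣ r := hB.dvd_of_mul_add_mul_eq_C hBmin (P := p) (Q := q)
    (by rwa [degree_eq_natDegree hg0]) (by rwa [degree_eq_natDegree hf0])
    (by rw [mul_comm p, mul_comm q]; exact hpq)
  rw [res_eq_resultant, hres]
  exact (dvd_abs _ _).2 (mul_dvd_mul_left _ hBr)

theorem statement_13 (f g : Polynomial ℤ)
    (hf : 0 < f.natDegree) (hg : 0 < g.natDegree)
    (hcop : IsCoprime (f.map (Int.castRingHom ℚ)) (g.map (Int.castRingHom ℚ)))
    (B : ℤ) (hB : IsBezoutDenom f g B)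
    (hBmin : ∀ B' : ℤ, IsBezoutDenom f g B' → B ≤ B') :
    (Int.gcd f.leadingCoeff g.leadingCoeff : ℤ) * B ∣ |res f g| :=
  statement_13_general f g hf hg B hB hBmin
end

section
/- Let f and g be coprime integer polynomials of positive degree. Then B(f,g) = |Res(f,g)| if and only if r(f,g) = |Res(f,g)|. -/
open Polynomial

/-!
Always `r ≤ B ≤ |Res f g|`, so it suffices to show `|Res f g| ∣ r` when `B = |Res f g|`. Let
`f * P + g * Q = Res f g` be the cofactors read off the adjugate of the Sylvester matrix. If
`B = |Res f g|`, no prime `π` divides all coefficients of `P` and `Q`, since otherwise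
`Res f g / π` would be a smaller Bezout denominator; as a prime dividing both leading coefficients
kills the top row of the Sylvester matrix, and with it every coefficient of `P` and `Q`, `π` does
not divide, say, `lc g`. Now take `π ^ k ∣ Res f g` and `f * u + g * v = r`. Modulo `π ^ k`,
`g` has unit leading coefficient and `f * P + g * Q = 0`, so `r * P = g * (v * P - u * Q)` has
degree below `deg g` and must vanish, and then so does `r * Q`. Some coefficient of `P` or `Q` is
prime to `π`, hence `π ^ k ∣ r`.
-/

section CommRing

variable {A : Type*} [CommRing A]

lemma Matrix.dvd_det_of_dvd_row {n : Type*} [Fintype n] [DecidableEq n] (M : Matrix n n A)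
    {d : A} (i : n) (h : ∀ j, d ∣ M i j) : d ∣ M.det := by
  rw [Matrix.det_eq_sum_mul_adjugate_row M i]
  exact Finset.dvd_sum fun j _ => (h j).mul_right _

lemma Matrix.dvd_adjugate_apply_of_dvd_row {n : Type*} [Fintype n] [DecidableEq n]
    (M : Matrix n n A) {d : A} {i k : n} (hik : i ≠ k) (h : ∀ j, d ∣ M i j) (l : n) :
    d ∣ M.adjugate l k := by
  rw [Matrix.adjugate_apply]
  refine Matrix.dvd_det_of_dvd_row _ i fun j => ?_
  rw [Matrix.updateRow_ne hik]
  exact h j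

lemma dvd_sylvester_of_val_eq (f g : A[X]) {d : A} (hf : d ∣ f.leadingCoeff)
    (hg : d ∣ g.leadingCoeff) {i : Fin (f.natDegree + g.natDegree)}
    (hi : (i : ℕ) = f.natDegree + g.natDegree - 1) (j : Fin (f.natDegree + g.natDegree)) :
    d ∣ sylvester f g f.natDegree g.natDegree i j := by
  induction j using Fin.addCases with
  | left j =>
    simp only [sylvester, Matrix.of_apply, Fin.addCases_left, Set.mem_Icc]
    split_ifs with hj
    · rwa [show (i : ℕ) - j = g.natDegree by omega]
    · exact dvd_zero d
  | right j =>
    simp only [sylvester, Matrix.of_apply, Fin.addCases_right, Set.mem_Icc]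
    split_ifs with hj
    · rwa [show (i : ℕ) - j = f.natDegree by omega]
    · exact dvd_zero d

lemma dvd_coeff_adjSylvester {m n : ℕ} (f g : A[X]) (x : A[X]_(m + n)) {d : A}
    (h : ∀ j, d ∣ (sylvester f g m n).adjugate.mulVec ((degreeLT.basis A _).repr x) j)
    (i : ℕ) :
    d ∣ (adjSylvester f g x).1.val.coeff i ∧
      d ∣ (adjSylvester f g x).2.val.coeff i := by
  rw [adjSylvester, Matrix.toLin_apply]
  simp only [Prod.fst_sum, Prod.snd_sum, Prod.smul_fst, Prod.smul_snd, Submodule.coe_sum,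
    Submodule.coe_smul, finsetSum_coeff, coeff_smul, smul_eq_mul]
  exact ⟨Finset.dvd_sum fun j _ => (h j).mul_right _,
    Finset.dvd_sum fun j _ => (h j).mul_right _⟩

theorem exists_resultant_cofactors (f g : A[X]) (hf : 0 < f.natDegree) (hg : 0 < g.natDegree) :
    ∃ p q : A[X], p.degree < g.degree ∧ q.degree < f.degree ∧
      f * p + g * q = C (resultant f g) ∧
      ∀ d, d ∣ f.leadingCoeff → d ∣ g.leadingCoeff →
        ∀ i, d ∣ p.coeff i ∧ d ∣ q.coeff i := by
  have h1 : (1 : A[X]) ∈ degreeLT A (f.natDegree + g.natDegree) :=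
    mem_degreeLT.2 (degree_one_le.trans_lt (by exact_mod_cast (by omega :
      0 < f.natDegree + g.natDegree)))
  refine ⟨(adjSylvester f g ⟨1, h1⟩).2, (adjSylvester f g ⟨1, h1⟩).1,
    (mem_degreeLT.1 (adjSylvester f g _).2.2).trans_eq
      (degree_eq_natDegree (ne_zero_of_natDegree_gt hg)).symm,
    (mem_degreeLT.1 (adjSylvester f g _).1.2).trans_eq
      (degree_eq_natDegree (ne_zero_of_natDegree_gt hf)).symm, ?_, fun d hdf hdg i => ?_⟩
  · simpa [Algebra.smul_def] using
      congr(($(sylveserMap_comp_adjSylvester f g le_rfl le_rfl) ⟨1, h1⟩).1)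
  -- The coordinates of `1` pick out column `0` of the adjugate, whose entries are minors
  -- keeping the top row `(0, …, 0, lc g, 0, …, 0, lc f)` of the Sylvester matrix.
  refine (dvd_coeff_adjSylvester f g _ (fun j => ?_) i).symm
  rw [Matrix.mulVec, dotProduct]
  refine Finset.dvd_sum fun k _ => ?_
  by_cases hk : (k : ℕ) = 0
  · exact ((sylvester f g _ _).dvd_adjugate_apply_of_dvd_row
      (i := ⟨f.natDegree + g.natDegree - 1, by omega⟩)
      (Fin.ne_of_val_ne (show f.natDegree + g.natDegree - 1 ≠ k by omega))
      (dvd_sylvester_of_val_eq f g hdf hdg rfl) j).mul_right _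
  · simp [coeff_one, hk]

lemma eq_zero_of_degree_mul_lt_of_isUnit_leadingCoeff {g h : A[X]}
    (hg : IsUnit g.leadingCoeff) (hdeg : (g * h).degree < g.degree) : h = 0 := by
  by_contra hh
  have hlc : g.leadingCoeff * h.leadingCoeff ≠ 0 := by
    rw [Ne, hg.mul_right_eq_zero]
    exact leadingCoeff_ne_zero.2 hh
  rw [degree_mul' hlc, degree_eq_natDegree hh] at hdeg
  exact (le_add_of_nonneg_right (by exact_mod_cast Nat.zero_le _)).not_gt hdeg

theorem C_mul_eq_zero_of_mul_add_mul_eq_zero {f g p q u v : A[X]} {c : A}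
    (hg : IsUnit g.leadingCoeff) (hp : p.degree < g.degree) (hpq : f * p + g * q = 0)
    (huv : f * u + g * v = C c) : C c * p = 0 ∧ C c * q = 0 := by
  have hcp : C c * p = g * (v * p - u * q) := by linear_combination (-p) * huv + u * hpq
  have hcp0 : C c * p = 0 := by
    have hdeg : (C c * p).degree < g.degree := by
      rw [← smul_eq_C_mul]
      exact (degree_smul_le _ _).trans_lt hp
    rw [hcp] at hdeg ⊢
    rw [eq_zero_of_degree_mul_lt_of_isUnit_leadingCoeff hg hdeg, mul_zero]
  refine ⟨hcp0, (isUnit_leadingCoeff_mul_right_eq_zero_iff hg).1 ?_⟩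
  linear_combination C c * hpq - f * hcp0

theorem dvd_mul_coeff_of_isCoprime_leadingCoeff
    {f g p q u v : A[X]} {d R c : A} (hd : ¬IsUnit d) (hdg : IsCoprime d g.leadingCoeff)
    (hp : p.degree < g.degree) (hpq : f * p + g * q = C R) (hR : d ∣ R)
    (huv : f * u + g * v = C c) (i : ℕ) : d ∣ c * p.coeff i ∧ d ∣ c * q.coeff i := by
  -- Modulo `d`, the resultant vanishes and `g` has unit leading coefficient.
  set φ := Ideal.Quotient.mk (Ideal.span {d})
  have hφ : ∀ x, φ x = 0 ↔ d ∣ x := fun x => by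
    rw [Ideal.Quotient.eq_zero_iff_mem, Ideal.mem_span_singleton]
  have : Nontrivial (A ⧸ Ideal.span {d}) :=
    Ideal.Quotient.nontrivial_iff.2 (by rwa [Ne, Ideal.span_singleton_eq_top])
  have hunit : IsUnit (φ g.leadingCoeff) := by
    obtain ⟨a, b, hab⟩ := hdg
    refine IsUnit.of_mul_eq_one (φ b) ?_
    rw [← map_mul, ← sub_eq_zero, ← map_one φ, ← map_sub, hφ]
    exact ⟨-a, by linear_combination hab⟩
  have hlc : (g.map φ).leadingCoeff = φ g.leadingCoeff :=
    leadingCoeff_map_of_leadingCoeff_ne_zero φ hunit.ne_zero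
  have hdeg : (g.map φ).degree = g.degree :=
    degree_map_eq_of_leadingCoeff_ne_zero φ hunit.ne_zero
  obtain ⟨hcp, hcq⟩ := C_mul_eq_zero_of_mul_add_mul_eq_zero (f := f.map φ) (u := u.map φ)
    (v := v.map φ) (c := φ c) (hlc ▸ hunit) (degree_map_le.trans_lt (hdeg ▸ hp))
    (by rw [← Polynomial.map_mul, ← Polynomial.map_mul, ← Polynomial.map_add, hpq, map_C,
      (hφ R).2 hR, C_0])
    (by rw [← Polynomial.map_mul, ← Polynomial.map_mul, ← Polynomial.map_add, huv, map_C])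
  constructor
  · simpa [← hφ, coeff_map] using congr(coeff $hcp i)
  · simpa [← hφ, coeff_map] using congr(coeff $hcq i)

end CommRing

section Integer

-- `sylvesterMatrix` lists coefficients by decreasing degree, hence the reversals.
lemma sylvesterMatrix_eq_submatrix (f g : ℤ[X]) :
    sylvesterMatrix f g = (sylvester g f g.natDegree f.natDegree).transpose.submatrix
      (finSumFinEquiv.symm.trans ((Equiv.sumCongr Fin.revPerm Fin.revPerm).trans finSumFinEquiv))
      Fin.revPerm := by
  ext i j
  induction i using Fin.addCases with
  | left i =>
    simp only [sylvesterMatrix, sylvester, Matrix.of_apply, Matrix.submatrix_apply,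
      Matrix.transpose_apply, Equiv.trans_apply, finSumFinEquiv_symm_apply_castAdd,
      Equiv.sumCongr_apply, Sum.map_inl, finSumFinEquiv_apply_left, Fin.addCases_left,
      Fin.val_castAdd, Fin.revPerm_apply, Fin.val_rev, Set.mem_Icc]
    split_ifs <;> first | rfl | omega | (congr 1; omega)
  | right i =>
    simp only [sylvesterMatrix, sylvester, Matrix.of_apply, Matrix.submatrix_apply,
      Matrix.transpose_apply, Equiv.trans_apply, finSumFinEquiv_symm_apply_natAdd,
      Equiv.sumCongr_apply, Sum.map_inr, finSumFinEquiv_apply_right, Fin.addCases_right,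
      Fin.val_natAdd, Fin.revPerm_apply, Fin.val_rev, Set.mem_Icc]
    split_ifs <;> first | rfl | omega | (congr 1; omega)

lemma abs_res_eq_abs_resultant (f g : ℤ[X]) : |res f g| = |resultant f g| := by
  rw [res, sylvesterMatrix_eq_submatrix, Matrix.abs_det_submatrix_equiv_equiv,
    Matrix.det_transpose, ← resultant, resultant_comm, abs_mul, abs_pow, abs_neg, abs_one,
    one_pow, one_mul]

variable {f g : ℤ[X]}

lemma resultant_ne_zero_of_isCoprime_map
    (hcop : IsCoprime (f.map (Int.castRingHom ℚ)) (g.map (Int.castRingHom ℚ))) :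
    resultant f g ≠ 0 := by
  have h := resultant_ne_zero _ _ hcop
  rwa [natDegree_map_eq_of_injective Int.cast_injective,
    natDegree_map_eq_of_injective Int.cast_injective, resultant_map_map,
    map_ne_zero_iff _ Int.cast_injective] at h

lemma isBezoutDenom_of_mul_add_mul_eq_C {P Q : ℤ[X]} {s : ℤ} (hs : 0 < s)
    (hP : P.degree < g.degree) (hQ : Q.degree < f.degree) (hPQ : f * P + g * Q = C s) :
    IsBezoutDenom f g s := by
  unfold IsBezoutDenom
  set ι := Int.castRingHom ℚ
  have hsQ : (s : ℚ) ≠ 0 := by exact_mod_cast hs.ne'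
  have hdeg {F G : ℤ[X]} (h : F.degree < G.degree) :
      (C (s : ℚ)⁻¹ * F.map ι).degree < (G.map ι).degree := by
    rw [← smul_eq_C_mul, degree_map_eq_of_injective ι.injective_int]
    exact (degree_smul_le _ _).trans_lt (degree_map_le.trans_lt h)
  have hcancel : C (s : ℚ) * C (s : ℚ)⁻¹ = 1 := by rw [← C_mul, mul_inv_cancel₀ hsQ, C_1]
  refine ⟨hs, C (s : ℚ)⁻¹ * P.map ι, C (s : ℚ)⁻¹ * Q.map ι, hdeg hP, hdeg hQ, ?_,
    ⟨P, by linear_combination -(P.map ι) * hcancel⟩,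
    ⟨Q, by linear_combination -(Q.map ι) * hcancel⟩⟩
  have h : f.map ι * P.map ι + g.map ι * Q.map ι = C (s : ℚ) := by
    rw [← Polynomial.map_mul, ← Polynomial.map_mul, ← Polynomial.map_add, hPQ, map_C,
      eq_intCast]
  linear_combination C (s : ℚ)⁻¹ * h + hcancel

lemma isBezoutDenom_abs {P Q : ℤ[X]} {s : ℤ} (hs : s ≠ 0)
    (hP : P.degree < g.degree) (hQ : Q.degree < f.degree) (hPQ : f * P + g * Q = C s) :
    IsBezoutDenom f g |s| := by
  refine isBezoutDenom_of_mul_add_mul_eq_C (P := s.sign • P) (Q := s.sign • Q)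
    (abs_pos.2 hs) ((degree_smul_le ..).trans_lt hP) ((degree_smul_le ..).trans_lt hQ) ?_
  rw [← Int.sign_mul_self_eq_abs, C_mul, ← hPQ, smul_eq_C_mul, smul_eq_C_mul]
  ring

lemma IsBezoutDenom.exists_mul_add_mul_eq_C {B : ℤ} (hB : IsBezoutDenom f g B) :
    ∃ u v : ℤ[X], u * f + v * g = C B := by
  obtain ⟨-, p, q, -, -, hpq, ⟨P, hP⟩, ⟨Q, hQ⟩⟩ := hB
  refine ⟨P, Q, map_injective _ (Int.castRingHom ℚ).injective_int ?_⟩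
  rw [Polynomial.map_add, Polynomial.map_mul, Polynomial.map_mul, hP, hQ, map_C, eq_intCast]
  linear_combination C (B : ℚ) * hpq

lemma isUnit_of_dvd_coeff_of_isBezoutDenom_minimal {P Q : ℤ[X]} {R d : ℤ} (hR : R ≠ 0)
    (hmin : ∀ B, IsBezoutDenom f g B → |R| ≤ B) (hP : P.degree < g.degree)
    (hQ : Q.degree < f.degree) (hPQ : f * P + g * Q = C R) (hd : d ≠ 0)
    (hdvd : ∀ i, d ∣ P.coeff i ∧ d ∣ Q.coeff i) : IsUnit d := by
  obtain ⟨P', rfl⟩ := (C_dvd_iff_dvd_coeff d P).2 fun i => (hdvd i).1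
  obtain ⟨Q', rfl⟩ := (C_dvd_iff_dvd_coeff d Q).2 fun i => (hdvd i).2
  have hCd : C d ≠ 0 := C_ne_zero.2 hd
  set s := (f * P' + g * Q').coeff 0
  have hPQ' : C d * (f * P' + g * Q') = C R := by rw [← hPQ]; ring
  have hRs : R = d * s := by
    simpa only [coeff_C_mul, coeff_C_zero] using congr(coeff $hPQ' 0).symm
  have hP's : f * P' + g * Q' = C s := mul_left_cancel₀ hCd (by rw [hPQ', ← C_mul, hRs])
  have hs : s ≠ 0 := right_ne_zero_of_mul (hRs ▸ hR)
  have hle := hmin _ (isBezoutDenom_abs hs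
    ((degree_le_mul_left P' hCd).trans_lt (by rwa [mul_comm] at hP))
    ((degree_le_mul_left Q' hCd).trans_lt (by rwa [mul_comm] at hQ)) hP's)
  rw [hRs, abs_mul] at hle
  exact Int.isUnit_iff_abs_eq.2 (le_antisymm (by nlinarith [abs_pos.2 hs]) (Int.one_le_abs hd))

theorem resultant_dvd_of_mul_add_mul_eq_C {P Q u v : ℤ[X]} {R c : ℤ}
    (hP : P.degree < g.degree) (hQ : Q.degree < f.degree) (hPQ : f * P + g * Q = C R)
    (hlc : ∀ d, d ∣ f.leadingCoeff → d ∣ g.leadingCoeff →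
      ∀ i, d ∣ P.coeff i ∧ d ∣ Q.coeff i)
    (hprim : ∀ π : ℤ, Prime π → ∃ i, ¬π ∣ P.coeff i ∨ ¬π ∣ Q.coeff i)
    (huv : f * u + g * v = C c) : R ∣ c := by
  rw [← Int.natAbs_dvd_natAbs, Nat.dvd_iff_prime_pow_dvd_dvd]
  intro π k hπ hk
  obtain rfl | hk0 := k.eq_zero_or_pos
  · simp
  rw [← Int.natCast_dvd] at hk ⊢
  push_cast at hk ⊢
  have hπ' : Prime (π : ℤ) := Nat.prime_iff_prime_int.1 hπ
  have hunit : ¬IsUnit ((π : ℤ) ^ k) := by rw [isUnit_pow_iff hk0.ne']; exact hπ'.not_isUnit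
  have hcop {a : ℤ} (ha : ¬(π : ℤ) ∣ a) : IsCoprime ((π : ℤ) ^ k) a :=
    ((Prime.coprime_iff_not_dvd hπ').2 ha).pow_left
  obtain ⟨i, hi⟩ := hprim π hπ'
  have hdvd : (π : ℤ) ^ k ∣ c * P.coeff i ∧ (π : ℤ) ^ k ∣ c * Q.coeff i := by
    by_cases hg : (π : ℤ) ∣ g.leadingCoeff
    · have hf : ¬(π : ℤ) ∣ f.leadingCoeff := fun hf => by
        have := hlc π hf hg i
        tauto
      exact (dvd_mul_coeff_of_isCoprime_leadingCoeff (f := g) (g := f) (u := v) (v := u) hunit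
        (hcop hf) hQ (by linear_combination hPQ) hk (by linear_combination huv) i).symm
    · exact dvd_mul_coeff_of_isCoprime_leadingCoeff hunit (hcop hg) hP hPQ hk huv i
  rcases hi with hi | hi
  · exact (hcop hi).dvd_of_dvd_mul_right hdvd.1
  · exact (hcop hi).dvd_of_dvd_mul_right hdvd.2

end Integer

theorem statement_15 (f g : Polynomial ℤ)
    (hf : 0 < f.natDegree) (hg : 0 < g.natDegree)
    (hcop : IsCoprime (f.map (Int.castRingHom ℚ)) (g.map (Int.castRingHom ℚ)))
    (r : ℤ) (hrpos : 0 < r)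
    (hrmem : ∃ u v : Polynomial ℤ, u * f + v * g = Polynomial.C r)
    (hrmin : ∀ s : ℤ, 0 < s →
      (∃ u v : Polynomial ℤ, u * f + v * g = Polynomial.C s) → r ≤ s)
    (B : ℤ) (hB : IsBezoutDenom f g B)
    (hBmin : ∀ B' : ℤ, IsBezoutDenom f g B' → B ≤ B') :
    B = |res f g| ↔ r = |res f g| := by
  obtain ⟨P, Q, hP, hQ, hPQ, hlc⟩ := exists_resultant_cofactors f g hf hg
  have hR := resultant_ne_zero_of_isCoprime_map hcop
  have hBR : B ≤ |resultant f g| := hBmin _ (isBezoutDenom_abs hR hP hQ hPQ)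
  have hrB : r ≤ B := hrmin B hB.1 hB.exists_mul_add_mul_eq_C
  rw [abs_res_eq_abs_resultant]
  refine ⟨fun hBR' => le_antisymm (hrB.trans hBR) (Int.le_of_dvd hrpos ?_),
    fun hr => le_antisymm hBR (hr ▸ hrB)⟩
  obtain ⟨u, v, huv⟩ := hrmem
  refine (abs_dvd _ _).2 (resultant_dvd_of_mul_add_mul_eq_C hP hQ hPQ hlc (fun π hπ => ?_)
    (u := u) (v := v) (by linear_combination huv))
  by_contra! h
  exact hπ.not_isUnit (isUnit_of_dvd_coeff_of_isBezoutDenom_minimal hR (hBR' ▸ hBmin) hP hQ hPQ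
    hπ.ne_zero h)
end
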